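/- arXiv:2605.04656 — 4 statements merged into one kernel-verified Lean document; each statement's English description precedes it below -/
import Mathlib

section
/- Let Θ̃ be a real n×(n+m) matrix, X ∈ ℝ^{n+m}, λ ∈ ℝ, and set x̃ := Θ̃·X (matrix-vector product) and Θ̃' := Θ̃ − λ·(x̃ Xᵀ), where x̃ Xᵀ denotes the outer product (the n×(n+m) matrix with entries x̃_i X_j). Then the squared Frobenius norms satisfy the exact identity ‖Θ̃'‖_F² = ‖Θ̃‖_F² − λ(2 − λ‖X‖²)‖x̃‖², where ‖X‖ and ‖x̃‖ are Euclidean norms. -/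
open Matrix
open scoped BigOperators

/-- descent identity underlying Theorem 1 of the paper: with
`x̃ = Θ̃ X` and `Θ̃' = Θ̃ − λ (x̃ Xᵀ)` (outer product), the squared Frobenius norms
satisfy `‖Θ̃'‖_F² = ‖Θ̃‖_F² − λ(2 − λ‖X‖²)‖x̃‖²`. Squared Frobenius norms are written
as sums of squares of entries, squared Euclidean norms as sums of squares of
coordinates. -/
theorem adaptive_law_descent_identity {n m : ℕ}
    (Θt : Matrix (Fin n) (Fin (n + m)) ℝ) (X : Fin (n + m) → ℝ) (lam : ℝ)
    (xt : Fin n → ℝ) (hxt : xt = Θt.mulVec X)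
    (Θt' : Matrix (Fin n) (Fin (n + m)) ℝ) (hΘt' : Θt' = Θt - lam • vecMulVec xt X) :
    (∑ i : Fin n, ∑ j : Fin (n + m), (Θt' i j) ^ 2) =
      (∑ i : Fin n, ∑ j : Fin (n + m), (Θt i j) ^ 2)
        - lam * (2 - lam * ∑ j : Fin (n + m), (X j) ^ 2) * (∑ i : Fin n, (xt i) ^ 2) := by
  subst hΘt'
  have key : ∀ i : Fin n, ∑ j, ((Θt - lam • vecMulVec xt X) i j) ^ 2
      = (∑ j, (Θt i j) ^ 2)
        - lam * (2 - lam * ∑ j, (X j) ^ 2) * (xt i) ^ 2 := by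
    intro i
    have hv : xt i = ∑ j, Θt i j * X j := by rw [hxt]; rfl
    have hterm : ∀ j, ((Θt - lam • vecMulVec xt X) i j) ^ 2
        = (Θt i j) ^ 2 - (2 * lam * xt i) * (Θt i j * X j)
          + (lam ^ 2 * (xt i) ^ 2) * (X j) ^ 2 := by
      intro j
      simp only [Matrix.sub_apply, Matrix.smul_apply, vecMulVec_apply, smul_eq_mul]
      ring
    rw [Finset.sum_congr rfl fun j _ => hterm j, Finset.sum_add_distrib,
      Finset.sum_sub_distrib, ← Finset.mul_sum, ← Finset.mul_sum, ← hv]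
    ring
  rw [Finset.sum_congr rfl fun i _ => key i, Finset.sum_sub_distrib, ← Finset.mul_sum]
end

section
/- Let λ > 0 and α ∈ (0, 2). Let Θ be a fixed real n×(n+m) matrix and (Θ̂_k)_{k∈ℕ} a sequence of real n×(n+m) matrices, and (X_k)_{k∈ℕ} a sequence in ℝ^{n+m} with ‖X_k‖² ≤ (2 − α)/λ for all k (Euclidean norm). Define the parameter error Θ̃_k := Θ − Θ̂_k and the prediction error x̃_{k+1} := Θ̃_k · X_k, and suppose the update law Θ̂_{k+1} = Θ̂_k + λ · (x̃_{k+1} X_kᵀ) holds for all k (with x̃_{k+1} X_kᵀ the outer product). Then: (a) the Frobenius norm ‖Θ̃_k‖_F is nonincreasing in k, so ‖Θ̃_k‖_F ≤ ‖Θ̃_0‖_F for all k; and (b) the prediction error converges to zero: x̃_{k+1} → 0 in ℝ^n as k → ∞. -/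
open Matrix Filter
open scoped BigOperators Topology

/-- The Frobenius norm of a real matrix: square root of the sum of squares of entries. -/
noncomputable def frobNorm {n p : ℕ} (M : Matrix (Fin n) (Fin p) ℝ) : ℝ :=
  Real.sqrt (∑ i : Fin n, ∑ j : Fin p, (M i j) ^ 2)

/-- Theorem 1 of the paper: under the excitation bound
`‖X_k‖² ≤ (2 − α)/λ` and the gradient update law
`Θ̂_{k+1} = Θ̂_k + λ x̃_{k+1} X_kᵀ` with `x̃_{k+1} = (Θ − Θ̂_k) X_k`, the Frobenius norm
of the parameter error `Θ̃_k = Θ − Θ̂_k` is nonincreasing (hence bounded by its initial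
value) and the prediction error `x̃_{k+1}` converges to `0`. -/
theorem adaptive_law_convergence {n m : ℕ} (lam α : ℝ)
    (hlam : 0 < lam) (hα : α ∈ Set.Ioo (0 : ℝ) 2)
    (Θ : Matrix (Fin n) (Fin (n + m)) ℝ)
    (Θhat : ℕ → Matrix (Fin n) (Fin (n + m)) ℝ)
    (X : ℕ → Fin (n + m) → ℝ)
    (hX : ∀ k, (∑ j : Fin (n + m), (X k j) ^ 2) ≤ (2 - α) / lam)
    (hupd : ∀ k, Θhat (k + 1) = Θhat k + lam • vecMulVec ((Θ - Θhat k).mulVec (X k)) (X k)) :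
    (Antitone fun k => frobNorm (Θ - Θhat k)) ∧
    (∀ k, frobNorm (Θ - Θhat k) ≤ frobNorm (Θ - Θhat 0)) ∧
    Tendsto (fun k => (Θ - Θhat k).mulVec (X k)) atTop (𝓝 0) := by
  obtain ⟨hα0, hα2⟩ := hα
  set E : ℕ → Matrix (Fin n) (Fin (n + m)) ℝ := fun k => Θ - Θhat k with hE
  set V : ℕ → ℝ := fun k => ∑ i, ∑ j, (E k i j) ^ 2 with hV
  set e : ℕ → ℝ := fun k => ∑ i, ((E k).mulVec (X k) i) ^ 2 with he
  set s : ℕ → ℝ := fun k => ∑ j, (X k j) ^ 2 with hs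
  have hEstep : ∀ k, E (k + 1) = E k - lam • vecMulVec ((E k).mulVec (X k)) (X k) := by
    intro k
    simp only [hE]
    rw [hupd k, sub_add_eq_sub_sub]
  have he0 : ∀ k, 0 ≤ e k := fun k => Finset.sum_nonneg fun i _ => sq_nonneg _
  have hs0 : ∀ k, 0 ≤ s k := fun k => Finset.sum_nonneg fun j _ => sq_nonneg _
  have hcoef : ∀ k, α ≤ 2 - lam * s k := by
    intro k
    have := hX k
    have h2 : lam * s k ≤ 2 - α := by
      rw [← le_div_iff₀' hlam]; exact this
    linarith
  have key : ∀ k, V (k + 1) = V k - lam * (2 - lam * s k) * e k := by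
    intro k
    have hb : ∀ i, (∑ j, E k i j * X k j) = (E k).mulVec (X k) i := by
      intro i; simp [Matrix.mulVec, dotProduct]
    have inner : ∀ i, (∑ j, (E (k + 1)) i j ^ 2)
        = (∑ j, (E k i j) ^ 2) - lam * (2 - lam * s k) * ((E k).mulVec (X k) i) ^ 2 := by
      intro i
      have hentry : ∀ j, (E (k + 1)) i j
          = E k i j - lam * ((E k).mulVec (X k) i * X k j) := by
        intro j
        rw [hEstep k]
        simp [Matrix.vecMulVec, Matrix.sub_apply]
      calc (∑ j, (E (k + 1)) i j ^ 2)
          = ∑ j, ((E k i j) ^ 2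
              - 2 * lam * ((E k).mulVec (X k) i) * (E k i j * X k j)
              + lam ^ 2 * ((E k).mulVec (X k) i) ^ 2 * (X k j) ^ 2) := by
            refine Finset.sum_congr rfl fun j _ => ?_
            rw [hentry j]; ring
        _ = (∑ j, (E k i j) ^ 2)
              - 2 * lam * ((E k).mulVec (X k) i) * (∑ j, E k i j * X k j)
              + lam ^ 2 * ((E k).mulVec (X k) i) ^ 2 * s k := by
            rw [Finset.sum_add_distrib, Finset.sum_sub_distrib, ← Finset.mul_sum,
              ← Finset.mul_sum, hs]
        _ = (∑ j, (E k i j) ^ 2) - lam * (2 - lam * s k) * ((E k).mulVec (X k) i) ^ 2 := by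
            rw [hb i]; ring
    calc V (k + 1) = ∑ i, (∑ j, (E (k + 1)) i j ^ 2) := rfl
      _ = ∑ i, ((∑ j, (E k i j) ^ 2) - lam * (2 - lam * s k) * ((E k).mulVec (X k) i) ^ 2) :=
          Finset.sum_congr rfl fun i _ => inner i
      _ = V k - lam * (2 - lam * s k) * e k := by
          rw [Finset.sum_sub_distrib, ← Finset.mul_sum]
  have hdec : ∀ k, lam * α * e k ≤ V k - V (k + 1) := by
    intro k
    rw [key k]
    have : lam * α * e k ≤ lam * (2 - lam * s k) * e k := by
      apply mul_le_mul_of_nonneg_right _ (he0 k)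
      exact mul_le_mul_of_nonneg_left (hcoef k) hlam.le
    linarith
  have hVstep : ∀ k, V (k + 1) ≤ V k := by
    intro k
    have h1 := hdec k
    have h2 : 0 ≤ lam * α * e k := by positivity
    linarith
  have hVanti : Antitone V := antitone_nat_of_succ_le hVstep
  have hV0 : ∀ k, 0 ≤ V k := fun k =>
    Finset.sum_nonneg fun i _ => Finset.sum_nonneg fun j _ => sq_nonneg _
  -- Frobenius norm statements
  have hfa : Antitone fun k => frobNorm (Θ - Θhat k) := by
    intro a b hab
    exact Real.sqrt_le_sqrt (hVanti hab)
  refine ⟨hfa, fun k => hfa (Nat.zero_le k), ?_⟩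
  -- convergence of V
  have hbdd : BddBelow (Set.range V) := ⟨0, fun x ⟨k, hk⟩ => hk ▸ hV0 k⟩
  have hVlim : Tendsto V atTop (𝓝 (⨅ k, V k)) := tendsto_atTop_ciInf hVanti hbdd
  have hVlim' : Tendsto (fun k => V (k + 1)) atTop (𝓝 (⨅ k, V k)) :=
    hVlim.comp (tendsto_add_atTop_nat 1)
  have hdiff : Tendsto (fun k => V k - V (k + 1)) atTop (𝓝 0) := by
    have := hVlim.sub hVlim'
    simpa using this
  have helim : Tendsto e atTop (𝓝 0) := by
    have hub : ∀ k, e k ≤ (V k - V (k + 1)) / (lam * α) := by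
      intro k
      rw [le_div_iff₀ (by positivity)]
      calc e k * (lam * α) = lam * α * e k := by ring
        _ ≤ V k - V (k + 1) := hdec k
    have hlim2 : Tendsto (fun k => (V k - V (k + 1)) / (lam * α)) atTop (𝓝 0) := by
      have := hdiff.div_const (lam * α)
      simpa using this
    exact squeeze_zero he0 hub hlim2
  -- componentwise convergence
  have hsqrt : Tendsto (fun k => Real.sqrt (e k)) atTop (𝓝 0) := by
    have := (Real.continuous_sqrt.tendsto 0).comp helim
    simpa [Function.comp_def] using this
  rw [tendsto_pi_nhds]
  intro i
  have hcomp : ∀ k, |(E k).mulVec (X k) i| ≤ Real.sqrt (e k) := by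
    intro k
    apply Real.abs_le_sqrt
    exact Finset.single_le_sum (f := fun i => ((E k).mulVec (X k) i) ^ 2)
      (fun j _ => sq_nonneg _) (Finset.mem_univ i)
  have h1 : Tendsto (fun k => (E k).mulVec (X k) i) atTop (𝓝 0) := by
    apply squeeze_zero_norm _ hsqrt
    intro k
    simpa using hcomp k
  simpa using h1
end

section
/- Let λ > 0 and α ∈ (0, 2). Equip the space of real n×(n+m) matrices with the Frobenius inner product and Frobenius norm ‖·‖_F, and let Ψ be a convex subset of this space containing the fixed matrix Θ. Let Θ̂_k ∈ Ψ, X_k ∈ ℝ^{n+m} with ‖X_k‖² ≤ (2 − α)/λ, set Θ̃_k := Θ − Θ̂_k and x̃_{k+1} := Θ̃_k · X_k, and let Θ̂_{k+1} ∈ Ψ be a projection of M_k := Θ̂_k + λ·(x̃_{k+1} X_kᵀ) onto Ψ, i.e., ‖M_k − Θ̂_{k+1}‖_F ≤ ‖M_k − Q‖_F for all Q ∈ Ψ. Then ‖Θ − Θ̂_{k+1}‖_F² ≤ ‖Θ − Θ̂_k‖_F² − λα‖x̃_{k+1}‖². -/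
open Matrix
open scoped BigOperators

noncomputable def matToE (n p : ℕ) : Matrix (Fin n) (Fin p) ℝ →ₗ[ℝ] EuclideanSpace ℝ (Fin n × Fin p) where
  toFun A := (WithLp.equiv 2 _).symm (fun q => A q.1 q.2)
  map_add' _ _ := rfl
  map_smul' _ _ := rfl

lemma matToE_norm_sq {n p : ℕ} (A : Matrix (Fin n) (Fin p) ℝ) :
    ‖matToE n p A‖ ^ 2 = ∑ i : Fin n, ∑ j : Fin p, (A i j) ^ 2 := by
  rw [EuclideanSpace.norm_eq, Real.sq_sqrt (by positivity)]
  simp [matToE, Fintype.sum_prod_type, sq_abs]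

lemma frobNorm_eq {n p : ℕ} (A : Matrix (Fin n) (Fin p) ℝ) :
    frobNorm A = ‖matToE n p A‖ := by
  rw [frobNorm, ← matToE_norm_sq, Real.sqrt_sq (norm_nonneg _)]

/-- one-step descent of the projected adaptive law (18): with
`Θ, Θ̂_k ∈ Ψ` convex, excitation bound `‖X_k‖² ≤ (2−α)/λ`,
`x̃_{k+1} = (Θ − Θ̂_k) X_k`, and `Θ̂_{k+1}` a Frobenius-norm projection of
`M_k = Θ̂_k + λ x̃_{k+1} X_kᵀ` onto `Ψ`, one has
`‖Θ − Θ̂_{k+1}‖_F² ≤ ‖Θ − Θ̂_k‖_F² − λα‖x̃_{k+1}‖²`. -/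
theorem projected_adaptive_law_descent {n m : ℕ} (lam α : ℝ)
    (hlam : 0 < lam) (hα : α ∈ Set.Ioo (0 : ℝ) 2)
    (Ψ : Set (Matrix (Fin n) (Fin (n + m)) ℝ)) (hΨ : Convex ℝ Ψ)
    (Θ : Matrix (Fin n) (Fin (n + m)) ℝ) (hΘ : Θ ∈ Ψ)
    (Θhatk : Matrix (Fin n) (Fin (n + m)) ℝ) (hΘhatk : Θhatk ∈ Ψ)
    (Xk : Fin (n + m) → ℝ) (hXk : (∑ j : Fin (n + m), (Xk j) ^ 2) ≤ (2 - α) / lam)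
    (xt : Fin n → ℝ) (hxt : xt = (Θ - Θhatk).mulVec Xk)
    (Mk : Matrix (Fin n) (Fin (n + m)) ℝ) (hMk : Mk = Θhatk + lam • vecMulVec xt Xk)
    (Θhatk1 : Matrix (Fin n) (Fin (n + m)) ℝ) (hΘhatk1 : Θhatk1 ∈ Ψ)
    (hproj : ∀ Q ∈ Ψ, frobNorm (Mk - Θhatk1) ≤ frobNorm (Mk - Q)) :
    (∑ i : Fin n, ∑ j : Fin (n + m), ((Θ - Θhatk1) i j) ^ 2) ≤
      (∑ i : Fin n, ∑ j : Fin (n + m), ((Θ - Θhatk) i j) ^ 2)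
        - lam * α * (∑ i : Fin n, (xt i) ^ 2) := by
  set f := matToE n (n + m) with hf
  set K : Set (EuclideanSpace ℝ (Fin n × Fin (n + m))) := f '' Ψ with hK
  have hKconv : Convex ℝ K := hΨ.linear_image f
  set u := f Mk
  set v := f Θhatk1
  set w := f Θ
  have hvK : v ∈ K := ⟨Θhatk1, hΘhatk1, rfl⟩
  have hwK : w ∈ K := ⟨Θ, hΘ, rfl⟩
  -- projection property in the Euclidean space
  have hproj' : ∀ q ∈ K, ‖u - v‖ ≤ ‖u - q‖ := by
    rintro q ⟨Q, hQ, rfl⟩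
    have h1 := hproj Q hQ
    rwa [frobNorm_eq, frobNorm_eq, map_sub, map_sub] at h1
  haveI : Nonempty K := ⟨⟨v, hvK⟩⟩
  have hinf : ‖u - v‖ = ⨅ q : K, ‖u - q‖ := by
    refine le_antisymm (le_ciInf fun q => hproj' q q.2) ?_
    exact ciInf_le ⟨0, fun _ ⟨_, h⟩ => h ▸ norm_nonneg _⟩ (⟨v, hvK⟩ : K)
  have hobtuse : inner ℝ (u - v) (w - v) ≤ (0 : ℝ) :=
    (norm_eq_iInf_iff_real_inner_le_zero hKconv hvK).mp hinf w hwK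
  -- distance to Θ decreases under projection
  have hdec : ‖w - v‖ ^ 2 ≤ ‖w - u‖ ^ 2 := by
    have h1 : w - v = (w - u) + (u - v) := by abel
    have h2 : ‖(w - u) + (u - v)‖ ^ 2
        = ‖w - u‖ ^ 2 + 2 * inner ℝ (w - u) (u - v) + ‖u - v‖ ^ 2 := by
      rw [norm_add_sq_real]
    have h3 : inner ℝ (w - u) (u - v) = (inner ℝ (u - v) (w - v) : ℝ) - ‖u - v‖ ^ 2 := by
      rw [real_inner_comm]
      rw [show w - u = (w - v) - (u - v) by abel, inner_sub_right]
      rw [real_inner_self_eq_norm_sq]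
    nlinarith [norm_nonneg (u - v), sq_nonneg ‖u - v‖, h1 ▸ h2]
  have hS1 : (∑ i : Fin n, ∑ j : Fin (n + m), ((Θ - Θhatk1) i j) ^ 2) = ‖w - v‖ ^ 2 := by
    rw [show w - v = f (Θ - Θhatk1) from (map_sub f _ _).symm, matToE_norm_sq]
  have hSM : ‖w - u‖ ^ 2 = (∑ i : Fin n, ∑ j : Fin (n + m), ((Θ - Mk) i j) ^ 2) := by
    rw [show w - u = f (Θ - Mk) from (map_sub f _ _).symm, matToE_norm_sq]
  -- entrywise formula
  have hentry : ∀ i j, (Θ - Mk) i j = (Θ - Θhatk) i j - lam * (xt i * Xk j) := by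
    intro i j
    simp [hMk, vecMulVec_apply, Matrix.sub_apply, Matrix.add_apply, Matrix.smul_apply,
      smul_eq_mul]
    ring
  have hxti : ∀ i, (∑ j : Fin (n + m), (Θ - Θhatk) i j * Xk j) = xt i := by
    intro i; rw [hxt]; simp [mulVec, dotProduct]
  -- expansion of the unprojected step
  have hexp : (∑ i : Fin n, ∑ j : Fin (n + m), ((Θ - Mk) i j) ^ 2)
      = (∑ i : Fin n, ∑ j : Fin (n + m), ((Θ - Θhatk) i j) ^ 2)
        - 2 * lam * (∑ i : Fin n, (xt i) ^ 2)
        + lam ^ 2 * ((∑ i : Fin n, (xt i) ^ 2) * (∑ j : Fin (n + m), (Xk j) ^ 2)) := by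
    have step1 : (∑ i : Fin n, ∑ j : Fin (n + m), ((Θ - Mk) i j) ^ 2)
        = ∑ i : Fin n, ∑ j : Fin (n + m),
            (((Θ - Θhatk) i j) ^ 2 - 2 * lam * (xt i * ((Θ - Θhatk) i j * Xk j))
              + lam ^ 2 * ((xt i) ^ 2 * (Xk j) ^ 2)) := by
      refine Finset.sum_congr rfl fun i _ => Finset.sum_congr rfl fun j _ => ?_
      rw [hentry]; ring
    have hcross : (∑ i : Fin n, ∑ j : Fin (n + m),
        2 * lam * (xt i * ((Θ - Θhatk) i j * Xk j)))
        = 2 * lam * (∑ i : Fin n, (xt i) ^ 2) := by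
      calc (∑ i : Fin n, ∑ j : Fin (n + m), 2 * lam * (xt i * ((Θ - Θhatk) i j * Xk j)))
          = ∑ i : Fin n, 2 * lam * xt i * ∑ j : Fin (n + m), (Θ - Θhatk) i j * Xk j := by
            refine Finset.sum_congr rfl fun i _ => ?_
            rw [Finset.mul_sum]
            exact Finset.sum_congr rfl fun j _ => by ring
        _ = 2 * lam * (∑ i : Fin n, (xt i) ^ 2) := by
            rw [Finset.mul_sum]
            refine Finset.sum_congr rfl fun i _ => ?_
            rw [hxti]; ring
    have hquad : (∑ i : Fin n, ∑ j : Fin (n + m), lam ^ 2 * ((xt i) ^ 2 * (Xk j) ^ 2))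
        = lam ^ 2 * ((∑ i : Fin n, (xt i) ^ 2) * (∑ j : Fin (n + m), (Xk j) ^ 2)) := by
      calc (∑ i : Fin n, ∑ j : Fin (n + m), lam ^ 2 * ((xt i) ^ 2 * (Xk j) ^ 2))
          = ∑ i : Fin n, lam ^ 2 * (xt i) ^ 2 * ∑ j : Fin (n + m), (Xk j) ^ 2 := by
            refine Finset.sum_congr rfl fun i _ => ?_
            rw [Finset.mul_sum]
            exact Finset.sum_congr rfl fun j _ => by ring
        _ = lam ^ 2 * ((∑ i : Fin n, (xt i) ^ 2) * (∑ j : Fin (n + m), (Xk j) ^ 2)) := by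
            rw [Finset.sum_mul, Finset.mul_sum]
            exact Finset.sum_congr rfl fun i _ => by ring
    rw [step1]
    simp only [Finset.sum_add_distrib, Finset.sum_sub_distrib]
    rw [hcross, hquad]
  -- finish
  have hx0 : 0 ≤ ∑ i : Fin n, (xt i) ^ 2 := by positivity
  have hbound : lam ^ 2 * ((∑ i : Fin n, (xt i) ^ 2) * (∑ j : Fin (n + m), (Xk j) ^ 2))
      ≤ lam * (2 - α) * (∑ i : Fin n, (xt i) ^ 2) := by
    have h1 := mul_le_mul_of_nonneg_left hXk
      (by positivity : (0:ℝ) ≤ lam ^ 2 * (∑ i : Fin n, (xt i) ^ 2))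
    have h2 : lam ^ 2 * (∑ i : Fin n, (xt i) ^ 2) * ((2 - α) / lam)
        = lam * (2 - α) * (∑ i : Fin n, (xt i) ^ 2) := by
      field_simp
    nlinarith
  have hfin := hdec
  rw [hSM] at hfin
  rw [← hS1] at hfin
  have hring : lam * (2 - α) * (∑ i : Fin n, (xt i) ^ 2)
      - 2 * lam * (∑ i : Fin n, (xt i) ^ 2)
      = -(lam * α * (∑ i : Fin n, (xt i) ^ 2)) := by ring
  linarith
end

section
/- Fix N ≥ 2, m ≥ 1, and scalars h_v ≥ 0 and h_Δ ∈ ℝ. Let v_prev ∈ ℝ^m and v_0, v_1, …, v_{N−1} ∈ ℝ^m satisfy, componentwise: (i) v_i ≤ h_v·𝟙_m for every i ∈ {0,…,N−1}; (ii) v_0 − v_prev ≤ h_Δ·𝟙_m and v_i − v_{i−1} ≤ h_Δ·𝟙_m for every i ∈ {1,…,N−1}; and (iii) the terminal condition v_{N−1} ≥ −h_Δ·𝟙_m. Define the shifted sequence w_0, …, w_{N−1} ∈ ℝ^m by w_i := v_{i+1} for i ∈ {0,…,N−2} and w_{N−1} := 0. Then, componentwise: w_i ≤ h_v·𝟙_m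 for every i ∈ {0,…,N−1}; w_0 − v_0 ≤ h_Δ·𝟙_m; and w_i − w_{i−1} ≤ h_Δ·𝟙_m for every i ∈ {1,…,N−1}. Here 𝟙_m ∈ ℝ^m is the all-ones vector and inequalities between vectors are componentwise. -/
/-- Lemma 7 of the paper, recursive feasibility of input and
input-rate constraints: if the sequence `v_0,…,v_{N−1}` is feasible w.r.t. the
magnitude bound `v_i ≤ h_v·𝟙`, the rate bounds `v_0 − v_prev ≤ h_Δ·𝟙`,
`v_i − v_{i−1} ≤ h_Δ·𝟙`, and the terminal condition `v_{N−1} ≥ −h_Δ·𝟙`, then the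
shifted sequence `w_i = v_{i+1}` (for `i ≤ N−2`), `w_{N−1} = 0`, satisfies the
magnitude bound and the rate bounds with previous input `v_0`. All inequalities are
componentwise. -/
theorem shifted_sequence_feasible {N m : ℕ} (hN : 2 ≤ N) (hm : 1 ≤ m)
    (h_v hΔ : ℝ) (hhv : 0 ≤ h_v)
    (v_prev : Fin m → ℝ) (v : ℕ → Fin m → ℝ)
    (hmag : ∀ i < N, ∀ j : Fin m, v i j ≤ h_v * 1)
    (hrate0 : ∀ j : Fin m, v 0 j - v_prev j ≤ hΔ * 1)
    (hrate : ∀ i, 1 ≤ i → i < N → ∀ j : Fin m, v i j - v (i - 1) j ≤ hΔ * 1)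
    (hterm : ∀ j : Fin m, -(hΔ * 1) ≤ v (N - 1) j)
    (w : ℕ → Fin m → ℝ)
    (hw : ∀ i, w i = if i + 1 < N then v (i + 1) else 0) :
    (∀ i < N, ∀ j : Fin m, w i j ≤ h_v * 1) ∧
      (∀ j : Fin m, w 0 j - v 0 j ≤ hΔ * 1) ∧
      (∀ i, 1 ≤ i → i < N → ∀ j : Fin m, w i j - w (i - 1) j ≤ hΔ * 1) := by
  refine ⟨?_, ?_, ?_⟩
  · intro i hi j
    rw [hw i]
    split
    · exact hmag (i + 1) (by assumption) j
    · simpa using hhv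
  · intro j
    have h1 : 0 + 1 < N := by omega
    rw [hw 0, if_pos h1]
    simpa using hrate 1 le_rfl (by omega) j
  · intro i hi1 hiN j
    have h2 : i - 1 + 1 < N := by omega
    have h3 : i - 1 + 1 = i := by omega
    have hwi1 : w (i - 1) = v i := by
      rw [hw (i - 1), if_pos h2, h3]
    rw [hw i, hwi1]
    by_cases h : i + 1 < N
    · rw [if_pos h]
      simpa using hrate (i + 1) (by omega) h j
    · rw [if_neg h]
      have hi : i = N - 1 := by omega
      have := hterm j
      rw [← hi] at this
      simp only [Pi.zero_apply]
      linarith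
end
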